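/- arXiv:1706.04859 — 4 statements merged into one kernel-verified Lean document; each statement's English description precedes it below -/
import Mathlib

section
/- Let S ⊆ ℝ^d, let Σ ⊂ S be a finite set, and let f : Σ → ℝ and g : Σ → ℝ^d be arbitrary functions. Then there exist N ∈ ℕ, vectors a₁,…,a_N ∈ ℝ^d and real numbers b₁,…,b_N, c₀, c₁,…,c_N such that the single hidden layer ReLU network h(x) = c₀ + Σ_{i=1}^N cᵢ · max(0, ⟨aᵢ, x⟩ + bᵢ) satisfies, for every σ ∈ Σ: h(σ) = f(σ), h is differentiable at σ, and ∇h(σ) = g(σ). -/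
/-!
Pick `v` with `⟪v, ·⟫` injective on `Σ` and, for each `τ ∈ Σ`, a perturbation
`u τ = g τ + M τ • v` of the prescribed gradient that is still injective on `Σ`. On the line,
four hinges `max 0 (s - κ)` combine to a function that is affine with any prescribed value and
slope near a point and vanishes away from it, so one-variable ReLU networks interpolate values and
derivatives at finitely many distinct points. Take `ψ₀` with values `f σ` and slopes `-M σ` at the
points `⟪v, σ⟫`, and `ψ τ` vanishing at the points `⟪u τ, σ⟫` with slope `1` at `σ = τ` and `0`
otherwise. Then `x ↦ ψ₀ ⟪v, x⟫ + ∑ τ, ψ τ ⟪u τ, x⟫` is a ReLU network with value `f σ` and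
gradient `-M σ • v + u σ = g σ` at every `σ ∈ Σ`.
-/

open Filter Topology InnerProductSpace
open scoped RealInnerProductSpace

section ReluNet

variable (E : Type*) [NormedAddCommGroup E] [InnerProductSpace ℝ E]

def reluNet : Submodule ℝ (E → ℝ) where
  carrier := {h | ∃ (N : ℕ) (a : Fin N → E) (b c : Fin N → ℝ) (c₀ : ℝ),
    h = fun x => c₀ + ∑ i, c i * max 0 (⟪a i, x⟫ + b i)}
  zero_mem' := ⟨0, ![], ![], ![], 0, by ext; simp⟩
  add_mem' := by
    rintro _ _ ⟨N₁, a₁, b₁, c₁, c₀₁, rfl⟩ ⟨N₂, a₂, b₂, c₂, c₀₂, rfl⟩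
    refine ⟨N₁ + N₂, Fin.append a₁ a₂, Fin.append b₁ b₂, Fin.append c₁ c₂, c₀₁ + c₀₂, ?_⟩
    funext x
    simp only [Pi.add_apply, Fin.sum_univ_add, Fin.append_left, Fin.append_right]
    ring
  smul_mem' := by
    rintro r _ ⟨N, a, b, c, c₀, rfl⟩
    refine ⟨N, a, b, r • c, r * c₀, ?_⟩
    funext x
    simp only [Pi.smul_apply, smul_eq_mul, mul_add, Finset.mul_sum, mul_assoc]

variable {E}

theorem comp_inner_mem_reluNet {ψ : ℝ → ℝ} (hψ : ψ ∈ reluNet ℝ) (u : E) :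
    (fun x => ψ ⟪u, x⟫) ∈ reluNet E := by
  obtain ⟨N, a, b, c, c₀, rfl⟩ := hψ
  refine ⟨N, fun i => a i • u, b, c, c₀, ?_⟩
  funext x
  simp only [Real.inner_apply, real_inner_smul_left]

end ReluNet

section Gradient

variable {E : Type*} [NormedAddCommGroup E] [InnerProductSpace ℝ E] [CompleteSpace E]

theorem HasGradientAt.add {f₁ f₂ : E → ℝ} {g₁ g₂ x : E} (h₁ : HasGradientAt f₁ g₁ x)
    (h₂ : HasGradientAt f₂ g₂ x) : HasGradientAt (fun y => f₁ y + f₂ y) (g₁ + g₂) x := by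
  rw [hasGradientAt_iff_hasFDerivAt, map_add] at *
  exact h₁.add h₂

theorem HasGradientAt.sum {ι : Type*} {s : Finset ι} {f : ι → E → ℝ} {g : ι → E} {x : E}
    (h : ∀ i ∈ s, HasGradientAt (f i) (g i) x) :
    HasGradientAt (fun y => ∑ i ∈ s, f i y) (∑ i ∈ s, g i) x := by
  simp only [hasGradientAt_iff_hasFDerivAt, map_sum] at *
  exact HasFDerivAt.fun_sum h

theorem HasDerivAt.hasGradientAt_comp_inner {ψ : ℝ → ℝ} {m : ℝ} {u x : E}
    (hψ : HasDerivAt ψ m ⟪u, x⟫) : HasGradientAt (fun y => ψ ⟪u, y⟫) (m • u) x := by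
  rw [hasGradientAt_iff_hasFDerivAt, map_smul]
  exact hψ.comp_hasFDerivAt x (toDual ℝ E u).hasFDerivAt

end Gradient

def hinge (κ : ℝ) : ℝ → ℝ := fun s => max 0 (s - κ)

theorem hinge_mem_reluNet (κ : ℝ) : hinge κ ∈ reluNet ℝ :=
  ⟨1, ![1], ![-κ], ![1], 0, by funext s; simp [hinge, sub_eq_add_neg]⟩

/-- The coefficients are the slope jumps of the piecewise linear function with knots `t ± δ`,
`t ± 2δ` that equals `y + m (s - t)` between `t - δ` and `t + δ` and vanishes outside
`(t - 2δ, t + 2δ)`. -/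
noncomputable def hermiteBump (t y m δ : ℝ) : ℝ → ℝ :=
  (y / δ - m) • hinge (t - 2 * δ) + (2 * m - y / δ) • hinge (t - δ)
    - (2 * m + y / δ) • hinge (t + δ) + (y / δ + m) • hinge (t + 2 * δ)

theorem hermiteBump_apply (t y m δ s : ℝ) : hermiteBump t y m δ s =
    (y / δ - m) * max 0 (s - (t - 2 * δ)) + (2 * m - y / δ) * max 0 (s - (t - δ))
    - (2 * m + y / δ) * max 0 (s - (t + δ)) + (y / δ + m) * max 0 (s - (t + 2 * δ)) := rfl

theorem hermiteBump_mem_reluNet (t y m δ : ℝ) : hermiteBump t y m δ ∈ reluNet ℝ := by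
  unfold hermiteBump
  refine add_mem (sub_mem (add_mem ?_ ?_) ?_) ?_ <;>
    exact Submodule.smul_mem _ _ (hinge_mem_reluNet _)

theorem hermiteBump_eventuallyEq {t δ : ℝ} (y m : ℝ) (hδ : 0 < δ) :
    hermiteBump t y m δ =ᶠ[𝓝 t] fun s => y + m * (s - t) := by
  filter_upwards [Ioo_mem_nhds (show t - δ < t by linarith) (show t < t + δ by linarith)]
    with s ⟨h₁, h₂⟩
  rw [hermiteBump_apply, max_eq_right (by linarith), max_eq_right (by linarith),
    max_eq_left (by linarith), max_eq_left (by linarith)]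
  field_simp
  ring

theorem hermiteBump_eq_zero {t δ s : ℝ} (y m : ℝ) (hδ : 0 < δ) (hs : 2 * δ ≤ |s - t|) :
    hermiteBump t y m δ s = 0 := by
  rw [hermiteBump_apply]
  rcases le_abs'.1 hs with hs | hs
  · rw [max_eq_left (by linarith), max_eq_left (by linarith),
      max_eq_left (by linarith), max_eq_left (by linarith)]
    ring
  · rw [max_eq_right (by linarith), max_eq_right (by linarith),
      max_eq_right (by linarith), max_eq_right (by linarith)]
    field_simp
    ring

theorem exists_pos_lt_abs_sub {ι : Type*} {s : Finset ι} {p : ι → ℝ} (hp : Set.InjOn p s) :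
    ∃ γ > 0, ∀ i ∈ s, ∀ j ∈ s, i ≠ j → γ < |p i - p j| := by
  have hsmall : ∀ᶠ γ in 𝓝 (0 : ℝ), ∀ i ∈ s, ∀ j ∈ s, i ≠ j → γ < |p i - p j| := by
    simp only [eventually_all_finset, eventually_imp_distrib_left]
    intro i hi j hj hij
    exact eventually_lt_nhds (abs_pos.2 (sub_ne_zero.2 (hp.ne hi hj hij)))
  obtain ⟨γ, hγ, hγ₀⟩ := (hsmall.filter_mono nhdsWithin_le_nhds).and
    (self_mem_nhdsWithin : Set.Ioi (0 : ℝ) ∈ 𝓝[>] 0) |>.exists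
  exact ⟨γ, hγ₀, hγ⟩

theorem exists_reluNet_hasDerivAt {ι : Type*} (s : Finset ι) {p : ι → ℝ} (hp : Set.InjOn p s)
    (y m : ι → ℝ) : ∃ ψ ∈ reluNet ℝ, ∀ i ∈ s, ψ (p i) = y i ∧ HasDerivAt ψ (m i) (p i) := by
  obtain ⟨γ, hγ, hgap⟩ := exists_pos_lt_abs_sub hp
  obtain ⟨δ, hδ, rfl⟩ : ∃ δ > 0, γ = 3 * δ := ⟨γ / 3, by positivity, by ring⟩
  refine ⟨∑ j ∈ s, hermiteBump (p j) (y j) (m j) δ,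
    Submodule.sum_mem _ fun j _ => hermiteBump_mem_reluNet _ _ _ _, fun i hi => ?_⟩
  have hloc : (∑ j ∈ s, hermiteBump (p j) (y j) (m j) δ) =ᶠ[𝓝 (p i)]
      fun x => y i + m i * (x - p i) := by
    filter_upwards [Metric.ball_mem_nhds (p i) hδ, hermiteBump_eventuallyEq (y i) (m i) hδ]
      with x hx hxi
    rw [Finset.sum_apply, Finset.sum_eq_single i _ (absurd hi), hxi]
    intro j hj hji
    refine hermiteBump_eq_zero _ _ hδ ?_
    have hx' : |x - p i| < δ := hx
    have := abs_sub_le (p i) x (p j)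
    rw [abs_sub_comm (p i) x] at this
    linarith [hgap i hi j hj hji.symm]
  have haffine : HasDerivAt (fun x => y i + m i * (x - p i)) (m i) (p i) := by
    simpa using (((hasDerivAt_id _).sub_const (p i)).const_mul (m i)).const_add (y i)
  exact ⟨by simpa using hloc.eq_of_nhds, haffine.congr_of_eventuallyEq hloc⟩

section Separation

variable {E : Type*} [NormedAddCommGroup E] [InnerProductSpace ℝ E]

theorem exists_injOn_inner (s : Finset E) : ∃ v : E, Set.InjOn (⟪v, ·⟫) s := by
  obtain ⟨v, hv⟩ := Module.Dual.exists_forall_ne_zero_of_forall_exists (K := ℝ)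
    (fun q : s.offDiag => innerₛₗ ℝ (q.1.1 - q.1.2))
    fun q => ⟨q.1.1 - q.1.2, inner_self_ne_zero.2 (sub_ne_zero.2 (Finset.mem_offDiag.1 q.2).2.2)⟩
  refine ⟨v, fun σ hσ τ hτ hστ =>
    by_contra fun hne => hv ⟨(σ, τ), Finset.mem_offDiag.2 ⟨hσ, hτ, hne⟩⟩ ?_⟩
  rw [innerₛₗ_apply_apply, inner_sub_left, real_inner_comm v, real_inner_comm v τ]
  exact sub_eq_zero.2 hστ

theorem exists_injOn_inner_add_smul {s : Finset E} {v : E} (hv : Set.InjOn (⟪v, ·⟫) s) (w : E) :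
    ∃ M : ℝ, Set.InjOn (⟪w + M • v, ·⟫) s := by
  obtain ⟨M, hM⟩ := Infinite.exists_notMem_finset
    ((s ×ˢ s).image fun q => -⟪w, q.1 - q.2⟫ / ⟪v, q.1 - q.2⟫)
  refine ⟨M, fun σ hσ τ hτ hστ => by_contra fun hne =>
    hM (Finset.mem_image.2 ⟨(σ, τ), Finset.mem_product.2 ⟨hσ, hτ⟩, ?_⟩)⟩
  have hv' : ⟪v, σ - τ⟫ ≠ 0 := by
    rw [inner_sub_right, sub_ne_zero]
    exact fun h => hne (hv hσ hτ h)
  simp only [inner_add_left, real_inner_smul_left] at hστ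
  rw [div_eq_iff hv', inner_sub_right, inner_sub_right]
  linarith

end Separation

theorem exists_reluNet_hasGradientAt {E : Type*} [NormedAddCommGroup E] [InnerProductSpace ℝ E]
    [CompleteSpace E] (s : Finset E) (f : E → ℝ) (g : E → E) :
    ∃ h ∈ reluNet E, ∀ σ ∈ s, h σ = f σ ∧ HasGradientAt h (g σ) σ := by
  classical
  obtain ⟨v, hv⟩ := exists_injOn_inner s
  choose M hM using fun τ => exists_injOn_inner_add_smul hv (g τ)
  obtain ⟨ψ₀, hψ₀, hψ₀s⟩ := exists_reluNet_hasDerivAt s hv f fun σ => -M σ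
  choose ψ hψ hψs using fun τ =>
    exists_reluNet_hasDerivAt s (hM τ) 0 fun σ => if σ = τ then 1 else 0
  refine ⟨fun x => ψ₀ ⟪v, x⟫ + ∑ τ ∈ s, ψ τ ⟪g τ + M τ • v, x⟫,
    add_mem (comp_inner_mem_reluNet hψ₀ v) ?_, fun σ hσ => ⟨?_, ?_⟩⟩
  · simpa only [Finset.sum_fn] using
      Submodule.sum_mem _ fun τ _ => comp_inner_mem_reluNet (hψ τ) (g τ + M τ • v)
  · dsimp only
    rw [(hψ₀s σ hσ).1, Finset.sum_eq_zero fun τ _ => (hψs τ σ hσ).1, add_zero]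
  · have hgrad := (hψ₀s σ hσ).2.hasGradientAt_comp_inner.add
      (HasGradientAt.sum (s := s) fun τ _ => (hψs τ σ hσ).2.hasGradientAt_comp_inner)
    convert hgrad using 1
    simp only [ite_smul, one_smul, zero_smul, Finset.sum_ite_eq, hσ, if_true]
    module

theorem relu_network_exact_finite_sobolev_interpolation_general
    (d : ℕ)
    (Sigma : Finset (EuclideanSpace ℝ (Fin d)))
    (f : EuclideanSpace ℝ (Fin d) → ℝ)
    (g : EuclideanSpace ℝ (Fin d) → EuclideanSpace ℝ (Fin d)) :
    ∃ (N : ℕ) (a : Fin N → EuclideanSpace ℝ (Fin d)) (b c : Fin N → ℝ) (c₀ : ℝ),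
      let h : EuclideanSpace ℝ (Fin d) → ℝ :=
        fun x => c₀ + ∑ i, c i * max 0 ((inner ℝ (a i) x : ℝ) + b i)
      ∀ σ ∈ Sigma, h σ = f σ ∧ DifferentiableAt ℝ h σ ∧ gradient h σ = g σ := by
  obtain ⟨h, ⟨N, a, b, c, c₀, rfl⟩, hh⟩ := exists_reluNet_hasGradientAt Sigma f g
  exact ⟨N, a, b, c, c₀, fun σ hσ =>
    ⟨(hh σ hσ).1, (hh σ hσ).2.differentiableAt, (hh σ hσ).2.gradient⟩⟩

/-- **Exact interpolation of values and gradients on a finite set by a ReLU network.**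
Given `S ⊆ ℝ^d`, a finite subset `Sigma ⊂ S`, and arbitrary prescribed values `f : Sigma → ℝ`
and gradients `g : Sigma → ℝ^d`, there is a single hidden layer ReLU network
`h(x) = c₀ + ∑ i, cᵢ * max 0 (⟪aᵢ, x⟫ + bᵢ)` with `h σ = f σ`, `h` differentiable at `σ`, and
`∇h σ = g σ` for every `σ ∈ Sigma`. -/
theorem relu_network_exact_finite_sobolev_interpolation
    (d : ℕ) (S : Set (EuclideanSpace ℝ (Fin d)))
    (Sigma : Finset (EuclideanSpace ℝ (Fin d))) (hSigmaS : ↑Sigma ⊆ S)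
    (f : EuclideanSpace ℝ (Fin d) → ℝ)
    (g : EuclideanSpace ℝ (Fin d) → EuclideanSpace ℝ (Fin d)) :
    ∃ (N : ℕ) (a : Fin N → EuclideanSpace ℝ (Fin d)) (b c : Fin N → ℝ) (c₀ : ℝ),
      let h : EuclideanSpace ℝ (Fin d) → ℝ :=
        fun x => c₀ + ∑ i, c i * max 0 ((inner ℝ (a i) x : ℝ) + b i)
      ∀ σ ∈ Sigma, h σ = f σ ∧ DifferentiableAt ℝ h σ ∧ gradient h σ = g σ :=
  relu_network_exact_finite_sobolev_interpolation_general d Sigma f g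
end

section
/- For μ ∈ ℝ and σ > 0 let p_{μ,σ}(x) = (1/(σ·√(2π))) · exp(−(x − μ)²/(2σ²)) denote the Gaussian probability density function. If μ₁, μ₂ ∈ ℝ, σ₁, σ₂ > 0 and there exists a single point x₀ ∈ ℝ with p_{μ₁,σ₁}(x₀) = p_{μ₂,σ₂}(x₀) and p'_{μ₁,σ₁}(x₀) = p'_{μ₂,σ₂}(x₀) (derivatives with respect to x), then μ₁ = μ₂ and σ₁ = σ₂. In other words, knowing the value and the derivative of a Gaussian pdf at one point uniquely determines its parameters, i.e. K_sob(F_G) = 1. -/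
/-!
Since `p' = p · (-(x - μ)/σ²)` and `p > 0`, equal values and derivatives at `x₀` give a common
slope `t = (x₀ - μᵢ)/σᵢ²`. Writing `x₀ - μᵢ = t σᵢ²`, the value becomes
`-log p = log √(2π) + log σᵢ + (t²/2) σᵢ²`, a strictly increasing function of `σᵢ > 0`;
so `σ₁ = σ₂`, and then `μ₁ = μ₂` from the common slope.
-/

open Real Set

noncomputable def gaussPDF (μ σ x : ℝ) : ℝ :=
  (1 / (σ * √(2 * π))) * exp (-(x - μ) ^ 2 / (2 * σ ^ 2))

lemma gaussPDF_pos {σ : ℝ} (hσ : 0 < σ) (μ x : ℝ) : 0 < gaussPDF μ σ x := by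
  unfold gaussPDF
  positivity

lemma hasDerivAt_gaussPDF (μ σ x : ℝ) :
    HasDerivAt (gaussPDF μ σ) (gaussPDF μ σ x * (-(x - μ) / σ ^ 2)) x := by
  have hexponent : HasDerivAt (fun y : ℝ => -(y - μ) ^ 2 / (2 * σ ^ 2))
      (-(2 * (x - μ) ^ 1 * 1) / (2 * σ ^ 2)) x :=
    (((hasDerivAt_id x).sub_const μ).pow 2).neg.div_const _
  refine (hexponent.exp.const_mul (1 / (σ * √(2 * π)))).congr_deriv ?_
  rw [gaussPDF]
  ring

lemma neg_log_gaussPDF {μ σ x t : ℝ} (hσ : 0 < σ) (hslope : x - μ = t * σ ^ 2) :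
    -log (gaussPDF μ σ x) = log √(2 * π) + (log σ + t ^ 2 / 2 * σ ^ 2) := by
  have hsqrt : 0 < √(2 * π) := by positivity
  rw [gaussPDF, log_mul (by positivity) (exp_pos _).ne', log_exp, one_div, log_inv,
    log_mul hσ.ne' hsqrt.ne', hslope]
  field_simp
  ring

lemma strictMonoOn_log_add_mul_sq {c : ℝ} (hc : 0 ≤ c) :
    StrictMonoOn (fun σ => log σ + c * σ ^ 2) (Ioi 0) :=
  strictMonoOn_log.add_monotone fun _ ha _ _ hab =>
    mul_le_mul_of_nonneg_left (pow_le_pow_left₀ ha.le hab 2) hc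

/-- **A Gaussian pdf is determined by its value and derivative at a single point:
`K_sob(F_G) = 1`.** If two Gaussian densities `p_{μ,σ}(x) = (σ√(2π))⁻¹ exp(−(x−μ)²/(2σ²))`
agree in value and in derivative at one point `x₀`, then they have the same parameters. -/
theorem gaussian_pdf_determined_by_value_and_deriv_at_one_point
    (p : ℝ → ℝ → ℝ → ℝ)
    (hp : ∀ μ σ x, p μ σ x = (1 / (σ * Real.sqrt (2 * π))) * Real.exp (-(x - μ)^2 / (2 * σ^2)))
    (μ₁ μ₂ σ₁ σ₂ : ℝ) (hσ₁ : 0 < σ₁) (hσ₂ : 0 < σ₂) (x₀ : ℝ)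
    (hval : p μ₁ σ₁ x₀ = p μ₂ σ₂ x₀)
    (hderiv : deriv (p μ₁ σ₁) x₀ = deriv (p μ₂ σ₂) x₀) :
    μ₁ = μ₂ ∧ σ₁ = σ₂ := by
  obtain rfl : p = gaussPDF := funext₃ hp
  rw [(hasDerivAt_gaussPDF μ₁ σ₁ x₀).deriv, (hasDerivAt_gaussPDF μ₂ σ₂ x₀).deriv, hval,
    mul_right_inj' (gaussPDF_pos hσ₂ μ₂ x₀).ne', neg_div, neg_div, neg_inj] at hderiv
  set t := (x₀ - μ₁) / σ₁ ^ 2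
  have hslope₁ : x₀ - μ₁ = t * σ₁ ^ 2 := (div_mul_cancel₀ _ (by positivity)).symm
  have hslope₂ : x₀ - μ₂ = t * σ₂ ^ 2 := by rw [hderiv, div_mul_cancel₀ _ (by positivity)]
  have hσ : σ₁ = σ₂ := by
    refine (strictMonoOn_log_add_mul_sq (by positivity : 0 ≤ t ^ 2 / 2)).injOn hσ₁ hσ₂ ?_
    have hneglog := congrArg (fun v => -log v) hval
    simp only [neg_log_gaussPDF hσ₁ hslope₁, neg_log_gaussPDF hσ₂ hslope₂] at hneglog
    linarith
  subst hσ
  exact ⟨by linarith, rfl⟩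
end

section
/- Let φ : ℝ → ℝ be continuously differentiable with finite limits lim_{x→−∞} φ(x) = φ₋ and lim_{x→+∞} φ(x) = φ₊, and with lim_{x→−∞} φ'(x) = lim_{x→+∞} φ'(x) = 0. Then for every ε > 0 there exist finitely many breakpoints ξ₁ < … < ξ_N and a continuous function p : ℝ → ℝ that is affine on (−∞, ξ₁], on each [ξ_i, ξ_{i+1}], and on [ξ_N, ∞), such that |φ(x) − p(x)| < ε for every x ∈ ℝ and |φ'(x) − p'(x)| < ε for every x ∈ ℝ \ {ξ₁, …, ξ_N} (p being differentiable at every such x). -/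
/-!
Outside a large interval `[a, b]` both `φ - φ(a)` (resp. `φ - φ(b)`) and `φ'` are small, so the
constant extensions of `φ(a)` and `φ(b)` approximate there. On `[a, b]` the derivative is uniformly
continuous, so on a fine enough grid every chord slope of `φ` (a value of `φ'`, by the mean value
theorem) is close to `φ'` throughout its cell. So the interpolant approximates `φ'`, and then `φ`
itself by the mean value inequality on a cell of length at most `1`, starting from the left node
where the two agree.
-/

open Filter Set Topology

section Tails

variable {α : Type*} [LinearOrder α] [Nonempty α] {f g : α → ℝ} {c ε : ℝ}

theorem eventually_forall_le_abs_sub_lt_and_abs_lt (hf : Tendsto f atBot (𝓝 c))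
    (hg : Tendsto g atBot (𝓝 0)) (hε : 0 < ε) :
    ∀ᶠ a in atBot, ∀ x ≤ a, |f x - f a| < ε ∧ |g x| < ε := by
  have hcauchy : ∀ᶠ p : α × α in atBot, |f p.1 - f p.2| < ε := by
    have h : Tendsto (fun p : α × α => |f p.1 - f p.2|) atBot (𝓝 0) := by
      rw [← prod_atBot_atBot_eq]
      simpa using ((hf.comp tendsto_fst).sub (hf.comp tendsto_snd)).abs
    exact h.eventually (eventually_lt_nhds hε)
  obtain ⟨a₀, ha₀⟩ := eventually_atBot_prod_self'.1 hcauchy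
  have hg_small : ∀ᶠ a in atBot, ∀ x ≤ a, |g x| < ε :=
    eventually_forall_le_atBot.2 <|
      (by simpa using hg.abs : Tendsto (fun x => |g x|) atBot (𝓝 0)).eventually
        (eventually_lt_nhds hε)
  filter_upwards [hg_small, eventually_le_atBot a₀] with a hga ha x hx
  exact ⟨ha₀ x (hx.trans ha) a ha, hga x hx⟩

theorem eventually_forall_ge_abs_sub_lt_and_abs_lt (hf : Tendsto f atTop (𝓝 c))
    (hg : Tendsto g atTop (𝓝 0)) (hε : 0 < ε) :
    ∀ᶠ b in atTop, ∀ x ≥ b, |f x - f b| < ε ∧ |g x| < ε :=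
  eventually_forall_le_abs_sub_lt_and_abs_lt (α := αᵒᵈ) hf hg hε

end Tails

theorem exists_lt_mem_Ico_of_mem_Ico {α : Type*} [LinearOrder α] {ν : ℕ → α} {n : ℕ} {x : α}
    (hx : x ∈ Ico (ν 0) (ν n)) : ∃ k < n, x ∈ Ico (ν k) (ν (k + 1)) := by
  classical
  have hex : ∃ m, x < ν m := ⟨n, hx.2⟩
  obtain ⟨k, hk⟩ : ∃ k, Nat.find hex = k + 1 :=
    Nat.exists_eq_succ_of_ne_zero fun h => (h ▸ Nat.find_spec hex).not_ge hx.1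
  refine ⟨k, ?_, not_lt.1 (Nat.find_min hex (hk ▸ k.lt_succ_self)), hk ▸ Nat.find_spec hex⟩
  exact Nat.succ_le_iff.1 (hk ▸ Nat.find_min' hex hx.2 :)

/-- The piecewise-linear interpolant of `f` at the nodes `ν 0 ≤ … ≤ ν n`, constant outside
`[ν 0, ν n]`: the `i`-th summand is the increment of the chord on `[ν i, ν (i + 1)]` up to `x`. -/
noncomputable def pwLinearInterp (f : ℝ → ℝ) (ν : ℕ → ℝ) (n : ℕ) (x : ℝ) : ℝ :=
  f (ν 0) + ∑ i ∈ Finset.range n,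
    slope f (ν i) (ν (i + 1)) * (min (max x (ν i)) (ν (i + 1)) - ν i)

section PwLinearInterp

variable (f : ℝ → ℝ) {ν : ℕ → ℝ} {n k : ℕ} {x : ℝ}

theorem pwLinearInterp_zero : pwLinearInterp f ν 0 x = f (ν 0) := by
  simp [pwLinearInterp]

theorem pwLinearInterp_succ : pwLinearInterp f ν (n + 1) x = pwLinearInterp f ν n x +
    slope f (ν n) (ν (n + 1)) * (min (max x (ν n)) (ν (n + 1)) - ν n) := by
  simp only [pwLinearInterp, Finset.sum_range_succ, add_assoc]

theorem continuous_pwLinearInterp : Continuous (pwLinearInterp f ν n) := by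
  unfold pwLinearInterp
  fun_prop

variable {f} (hν : Monotone ν)
include hν

theorem pwLinearInterp_eq_of_le {m : ℕ} (hmn : m ≤ n) (hx : x ≤ ν m) :
    pwLinearInterp f ν n x = pwLinearInterp f ν m x := by
  induction n, hmn using Nat.le_induction with
  | base => rfl
  | succ n hmn ih =>
    rw [pwLinearInterp_succ, ih, max_eq_right (hx.trans (hν hmn)), min_eq_left (hν n.le_succ),
      sub_self, mul_zero, add_zero]

theorem pwLinearInterp_of_le_left (hx : x ≤ ν 0) : pwLinearInterp f ν n x = f (ν 0) := by
  rw [pwLinearInterp_eq_of_le hν n.zero_le hx, pwLinearInterp_zero]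

theorem pwLinearInterp_of_right_le (hx : ν n ≤ x) : pwLinearInterp f ν n x = f (ν n) := by
  induction n with
  | zero => exact pwLinearInterp_zero f
  | succ n ih =>
    have hxn : ν n ≤ x := (hν n.le_succ).trans hx
    rw [pwLinearInterp_succ, ih hxn, max_eq_left hxn, min_eq_right hx, mul_comm, ← smul_eq_mul,
      sub_smul_slope, vsub_eq_sub, add_sub_cancel]

theorem pwLinearInterp_of_mem_Icc (hk : k < n) (hx : x ∈ Icc (ν k) (ν (k + 1))) :
    pwLinearInterp f ν n x = f (ν k) + slope f (ν k) (ν (k + 1)) * (x - ν k) := by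
  rw [pwLinearInterp_eq_of_le hν hk hx.2, pwLinearInterp_succ, pwLinearInterp_of_right_le hν hx.1,
    max_eq_left hx.1, min_eq_left hx.2]

theorem hasDerivAt_pwLinearInterp_of_lt_left (hx : x < ν 0) :
    HasDerivAt (pwLinearInterp f ν n) 0 x :=
  (hasDerivAt_const x (f (ν 0))).congr_of_eventuallyEq <|
    (eventually_lt_nhds hx).mono fun _ hy => pwLinearInterp_of_le_left hν hy.le

theorem hasDerivAt_pwLinearInterp_of_right_lt (hx : ν n < x) :
    HasDerivAt (pwLinearInterp f ν n) 0 x :=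
  (hasDerivAt_const x (f (ν n))).congr_of_eventuallyEq <|
    (eventually_gt_nhds hx).mono fun _ hy => pwLinearInterp_of_right_le hν hy.le

theorem hasDerivAt_pwLinearInterp_of_mem_Ioo (hk : k < n) (hx : x ∈ Ioo (ν k) (ν (k + 1))) :
    HasDerivAt (pwLinearInterp f ν n) (slope f (ν k) (ν (k + 1))) x := by
  have hchord : HasDerivAt (fun y => f (ν k) + slope f (ν k) (ν (k + 1)) * (y - ν k))
      (slope f (ν k) (ν (k + 1))) x := by
    simpa using (((hasDerivAt_id x).sub_const (ν k)).const_mul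
      (slope f (ν k) (ν (k + 1)))).const_add (f (ν k))
  exact hchord.congr_of_eventuallyEq <| eventually_of_mem (isOpen_Ioo.mem_nhds hx) fun _ hy =>
    pwLinearInterp_of_mem_Icc hν hk (Ioo_subset_Icc_self hy)

end PwLinearInterp

section Cell

variable {f : ℝ → ℝ} {u v s M x : ℝ}

theorem abs_deriv_sub_slope_le (hf : Differentiable ℝ f) (huv : u < v)
    (hosc : ∀ y ∈ Icc u v, ∀ z ∈ Icc u v, |deriv f y - deriv f z| ≤ M) (hx : x ∈ Icc u v) :
    |deriv f x - slope f u v| ≤ M := by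
  obtain ⟨c, hc, hslope⟩ := exists_deriv_eq_slope' f huv hf.continuous.continuousOn
    hf.differentiableOn
  exact hslope ▸ hosc x hx c (Ioo_subset_Icc_self hc)

theorem abs_sub_chord_le (hf : Differentiable ℝ f) (hs : ∀ y ∈ Icc u v, |deriv f y - s| ≤ M)
    (hx : x ∈ Icc u v) : |f x - (f u + s * (x - u))| ≤ M * (x - u) := by
  have hderiv : ∀ y, HasDerivAt (fun y => f y - s * y) (deriv f y - s) y := fun y => by
    simpa using (hf y).hasDerivAt.fun_sub ((hasDerivAt_id' y).const_mul s)
  have h := (convex_Icc u v).norm_image_sub_le_of_norm_hasDerivWithin_le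
    (fun y _ => (hderiv y).hasDerivWithinAt) hs (left_mem_Icc.2 (hx.1.trans hx.2)) hx
  rw [Real.norm_eq_abs, Real.norm_of_nonneg (sub_nonneg.2 hx.1)] at h
  convert h using 2
  ring

end Cell

theorem exists_partition_sub_lt {a b δ : ℝ} (hab : a < b) (hδ : 0 < δ) :
    ∃ n : ℕ, ∃ ν : ℕ → ℝ, StrictMono ν ∧ ν 0 = a ∧ ν n = b ∧ ∀ k, ν (k + 1) - ν k < δ := by
  obtain ⟨n, hn⟩ := exists_nat_gt ((b - a) / δ)
  have hn0 : (0 : ℝ) < n := (div_pos (sub_pos.2 hab) hδ).trans hn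
  refine ⟨n, fun k => a + k * ((b - a) / n), fun i j hij => ?_, by simp, by field_simp; ring,
    fun k => ?_⟩
  · have : (i : ℝ) < j := Nat.cast_lt.2 hij
    have : 0 < (b - a) / n := div_pos (sub_pos.2 hab) hn0
    dsimp only
    gcongr
  · push_cast
    rw [add_sub_add_left_eq_sub, ← sub_mul, add_sub_cancel_left, one_mul, div_lt_iff₀ hn0]
    rwa [div_lt_iff₀ hδ, mul_comm] at hn

theorem exists_partition_abs_sub_le {g : ℝ → ℝ} {a b h M : ℝ} (hab : a < b)
    (hg : ContinuousOn g (Icc a b)) (hh : 0 < h) (hM : 0 < M) :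
    ∃ n : ℕ, ∃ ν : ℕ → ℝ, StrictMono ν ∧ ν 0 = a ∧ ν n = b ∧ (∀ k, ν (k + 1) - ν k < h) ∧
      ∀ k < n, ∀ y ∈ Icc (ν k) (ν (k + 1)), ∀ z ∈ Icc (ν k) (ν (k + 1)), |g y - g z| ≤ M := by
  obtain ⟨δ, hδ, hgδ⟩ :=
    Metric.uniformContinuousOn_iff.1 (isCompact_Icc.uniformContinuousOn_of_continuous hg) M hM
  obtain ⟨n, ν, hν, hν0, hνn, hwidth⟩ := exists_partition_sub_lt hab (lt_min hδ hh)
  refine ⟨n, ν, hν, hν0, hνn, fun k => (hwidth k).trans_le (min_le_right _ _),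
    fun k hk y hy z hz => ?_⟩
  have hcell : Icc (ν k) (ν (k + 1)) ⊆ Icc a b :=
    hν0 ▸ hνn ▸ Icc_subset_Icc (hν.monotone k.zero_le) (hν.monotone hk)
  have hyz : dist y z < δ := by
    rw [Real.dist_eq, abs_lt]
    constructor <;> linarith [hwidth k, min_le_left δ h, hy.1, hy.2, hz.1, hz.2]
  simpa [Real.dist_eq] using (hgδ y (hcell hy) z (hcell hz) hyz).le

section Approximation

variable {φ : ℝ → ℝ} {ν : ℕ → ℝ} {n k : ℕ} {M ε x : ℝ} (hφ : Differentiable ℝ φ)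
  (hν : StrictMono ν)
  (hosc : ∀ k < n, ∀ y ∈ Icc (ν k) (ν (k + 1)), ∀ z ∈ Icc (ν k) (ν (k + 1)),
    |deriv φ y - deriv φ z| ≤ M)
include hφ hν hosc

theorem abs_sub_pwLinearInterp_le_of_mem_Ico (hwidth : ∀ k < n, ν (k + 1) - ν k ≤ 1)
    (hx : x ∈ Ico (ν 0) (ν n)) : |φ x - pwLinearInterp φ ν n x| ≤ M := by
  obtain ⟨k, hk, hxk⟩ := exists_lt_mem_Ico_of_mem_Ico hx
  have hxk' := Ico_subset_Icc_self hxk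
  have hM : 0 ≤ M := (abs_nonneg _).trans (hosc k hk x hxk' x hxk')
  rw [pwLinearInterp_of_mem_Icc hν.monotone hk hxk']
  calc _ ≤ M * (x - ν k) := abs_sub_chord_le hφ
          (fun y hy => abs_deriv_sub_slope_le hφ (hν k.lt_succ_self) (hosc k hk) hy) hxk'
    _ ≤ M := mul_le_of_le_one_right hM (by linarith [hwidth k hk, hxk.2])

theorem exists_hasDerivAt_pwLinearInterp_abs_sub_le (hk : k < n)
    (hx : x ∈ Ioo (ν k) (ν (k + 1))) :
    ∃ p', HasDerivAt (pwLinearInterp φ ν n) p' x ∧ |deriv φ x - p'| ≤ M :=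
  ⟨_, hasDerivAt_pwLinearInterp_of_mem_Ioo hν.monotone hk hx,
    abs_deriv_sub_slope_le hφ (hν k.lt_succ_self) (hosc k hk) (Ioo_subset_Icc_self hx)⟩

variable (hM : M < ε) (hleft : ∀ x ≤ ν 0, |φ x - φ (ν 0)| < ε ∧ |deriv φ x| < ε)
  (hright : ∀ x ≥ ν n, |φ x - φ (ν n)| < ε ∧ |deriv φ x| < ε)
include hM hleft hright

theorem abs_sub_pwLinearInterp_lt (hwidth : ∀ k < n, ν (k + 1) - ν k ≤ 1) (x : ℝ) :
    |φ x - pwLinearInterp φ ν n x| < ε := by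
  rcases le_or_gt x (ν 0) with hx0 | hx0
  · rw [pwLinearInterp_of_le_left hν.monotone hx0]
    exact (hleft x hx0).1
  rcases le_or_gt (ν n) x with hxn | hxn
  · rw [pwLinearInterp_of_right_le hν.monotone hxn]
    exact (hright x hxn).1
  exact (abs_sub_pwLinearInterp_le_of_mem_Ico hφ hν hosc hwidth ⟨hx0.le, hxn⟩).trans_lt hM

theorem exists_hasDerivAt_pwLinearInterp_abs_sub_lt (hx : ∀ i ≤ n, ν i ≠ x) :
    ∃ p', HasDerivAt (pwLinearInterp φ ν n) p' x ∧ |deriv φ x - p'| < ε := by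
  rcases lt_or_ge x (ν 0) with hx0 | hx0
  · exact ⟨0, hasDerivAt_pwLinearInterp_of_lt_left hν.monotone hx0,
      by simpa using (hleft x hx0.le).2⟩
  rcases lt_or_ge (ν n) x with hxn | hxn
  · exact ⟨0, hasDerivAt_pwLinearInterp_of_right_lt hν.monotone hxn,
      by simpa using (hright x hxn.le).2⟩
  obtain ⟨k, hk, hxk⟩ := exists_lt_mem_Ico_of_mem_Ico ⟨hx0, hxn.lt_of_ne (hx n le_rfl).symm⟩
  obtain ⟨p', hp', hle⟩ := exists_hasDerivAt_pwLinearInterp_abs_sub_le hφ hν hosc hk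
    ⟨hxk.1.lt_of_ne (hx k hk.le), hxk.2⟩
  exact ⟨p', hp', hle.trans_lt hM⟩

end Approximation

/-- **Piecewise-linear Sobolev approximation on all of `ℝ` (Lemma 2).**
Let `φ : ℝ → ℝ` be `C¹` with finite limits `φ₋`, `φ₊` at `∓∞` and with `φ' → 0` at `±∞`.
For every `ε > 0` there are breakpoints `ξ₁ < … < ξ_N` and a continuous `p : ℝ → ℝ`, affine
on `(−∞, ξ₁]`, on each `[ξ_i, ξ_{i+1}]`, and on `[ξ_N, ∞)`, with `|φ x - p x| < ε` on `ℝ`,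
and `p` differentiable with `|φ' x - p' x| < ε` at every non-breakpoint. -/
theorem piecewise_linear_sobolev_approximation_on_real_line
    (φ : ℝ → ℝ) (hφ : ContDiff ℝ 1 φ) (φm φp : ℝ)
    (hlim_bot : Tendsto φ atBot (nhds φm)) (hlim_top : Tendsto φ atTop (nhds φp))
    (hderiv_bot : Tendsto (deriv φ) atBot (nhds 0))
    (hderiv_top : Tendsto (deriv φ) atTop (nhds 0))
    (ε : ℝ) (hε : 0 < ε) :
    ∃ (N : ℕ) (ξ : Fin (N + 1) → ℝ) (p : ℝ → ℝ),
      StrictMono ξ ∧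
      Continuous p ∧
      (∃ a b : ℝ, ∀ x ∈ Set.Iic (ξ 0), p x = a * x + b) ∧
      (∀ i : Fin N, ∃ a b : ℝ,
        ∀ x ∈ Set.Icc (ξ i.castSucc) (ξ i.succ), p x = a * x + b) ∧
      (∃ a b : ℝ, ∀ x ∈ Set.Ici (ξ (Fin.last N)), p x = a * x + b) ∧
      (∀ x : ℝ, |φ x - p x| < ε) ∧
      (∀ x : ℝ, x ∉ Set.range ξ →
        DifferentiableAt ℝ p x ∧ |deriv φ x - deriv p x| < ε) := by
  obtain ⟨a, ha⟩ := (eventually_forall_le_abs_sub_lt_and_abs_lt hlim_bot hderiv_bot hε).exists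
  obtain ⟨b, hb, hab⟩ := ((eventually_forall_ge_abs_sub_lt_and_abs_lt hlim_top hderiv_top hε).and
    (eventually_gt_atTop a)).exists
  obtain ⟨n, ν, hν, rfl, rfl, hwidth, hosc⟩ := exists_partition_abs_sub_le hab
    (hφ.continuous_deriv le_rfl).continuousOn one_pos (half_pos hε)
  have hφ' : Differentiable ℝ φ := hφ.differentiable one_ne_zero
  refine ⟨n, fun i => ν i, pwLinearInterp φ ν n, hν.comp Fin.val_strictMono,
    continuous_pwLinearInterp φ, ⟨0, φ (ν 0), fun x hx => ?_⟩,
    fun i => ⟨slope φ (ν i) (ν (i + 1)), φ (ν i) - slope φ (ν i) (ν (i + 1)) * ν i,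
      fun x hx => ?_⟩, ⟨0, φ (ν n), fun x hx => ?_⟩,
    abs_sub_pwLinearInterp_lt hφ' hν hosc (half_lt_self hε) ha hb fun k _ => (hwidth k).le,
    fun x hx => ?_⟩
  · rw [pwLinearInterp_of_le_left hν.monotone (by simpa using hx)]
    ring
  · rw [pwLinearInterp_of_mem_Icc hν.monotone i.isLt (by simpa using hx)]
    ring
  · rw [pwLinearInterp_of_right_le hν.monotone (by simpa using hx)]
    ring
  · obtain ⟨p', hp', hlt⟩ := exists_hasDerivAt_pwLinearInterp_abs_sub_lt hφ' hν hosc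
      (half_lt_self hε) ha hb fun i hi hxi => hx ⟨⟨i, Nat.lt_succ_of_le hi⟩, hxi⟩
    exact ⟨hp'.differentiableAt, hp'.deriv ▸ hlt⟩
end

section
/- Let σ(x) = 1/(1 + e^{−x}) be the logistic sigmoid. For every ε > 0 there exist N ∈ ℕ, real numbers c₀, c₁, …, c_N and points ξ₁ < … < ξ_N such that the finite combination of ReLU functions h(x) = c₀ + Σ_{i=1}^N cᵢ · max(0, x − ξᵢ) satisfies |σ(x) − h(x)| < ε for every x ∈ ℝ and, for every x ∈ ℝ \ {ξ₁, …, ξ_N}, h is differentiable at x with |σ'(x) − h'(x)| < ε. -/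
/-!
Interpolate `f` linearly on a uniform grid of `[-M, M]` and extend the interpolant by constants.
Being piecewise linear, it is a ReLU combination whose coefficients are the jumps of its slope.
By the mean value theorem the slope on each grid segment is a value of `f'` on that segment, so
uniform continuity of `f'` on `[-M, M]` bounds the derivative error there, and the value error
accumulated along the segments by `ω · 2M`. Outside `[-M, M]` the interpolant is constant and the
limits of `f` and `f'` at `±∞` bound both errors once `M` is large. The sigmoid is such an `f`.
-/

open Filter Topology Set

theorem eventually_abs_sub_comp_max_min_lt {f : ℝ → ℝ} {a b ε : ℝ}
    (hfa : Tendsto f atBot (𝓝 a)) (hfb : Tendsto f atTop (𝓝 b)) (hε : 0 < ε) :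
    ∀ᶠ M in atTop, ∀ x, |f x - f (max (-M) (min M x))| < ε := by
  obtain ⟨A, hA⟩ := eventually_atBot.1 (Metric.tendsto_nhds.1 hfa (ε / 2) (half_pos hε))
  obtain ⟨B, hB⟩ := eventually_atTop.1 (Metric.tendsto_nhds.1 hfb (ε / 2) (half_pos hε))
  filter_upwards [eventually_ge_atTop 0, eventually_ge_atTop (-A), eventually_ge_atTop B]
    with M hM hMA hMB x
  rw [← Real.dist_eq]
  rcases le_total x (-M) with hx | hx
  · rw [max_eq_left ((min_le_right _ _).trans hx)]
    exact (dist_triangle_right _ _ a).trans_lt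
      (by linarith [hA x (by linarith), hA (-M) (by linarith)])
  rcases le_total x M with hx' | hx'
  · rw [min_eq_right hx', max_eq_right hx, dist_self]; exact hε
  · rw [min_eq_left hx', max_eq_right (by linarith)]
    exact (dist_triangle_right _ _ b).trans_lt (by linarith [hB x (by linarith), hB M hMB])

theorem eventually_abs_lt_of_notMem_Icc {g : ℝ → ℝ} {ε : ℝ}
    (hga : Tendsto g atBot (𝓝 0)) (hgb : Tendsto g atTop (𝓝 0)) (hε : 0 < ε) :
    ∀ᶠ M in atTop, ∀ x ∉ Icc (-M) M, |g x| < ε := by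
  obtain ⟨A, hA⟩ := eventually_atBot.1 (Metric.tendsto_nhds.1 hga ε hε)
  obtain ⟨B, hB⟩ := eventually_atTop.1 (Metric.tendsto_nhds.1 hgb ε hε)
  filter_upwards [eventually_ge_atTop (-A), eventually_ge_atTop B] with M hMA hMB x hx
  rw [← Real.dist_0_eq_abs]
  rcases not_and_or.1 hx with hx | hx
  · exact hA x (by linarith [not_le.1 hx])
  · exact hB x (by linarith [not_le.1 hx])

noncomputable def uniformGrid (a b : ℝ) (n i : ℕ) : ℝ := a + i * ((b - a) / n)

theorem uniformGrid_strictMono {a b : ℝ} (hab : a < b) {n : ℕ} (hn : 0 < n) :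
    StrictMono (uniformGrid a b n) := fun i j hij => by
  have : 0 < (b - a) / n := div_pos (sub_pos.2 hab) (Nat.cast_pos.2 hn)
  unfold uniformGrid
  gcongr

theorem uniformGrid_zero (a b : ℝ) (n : ℕ) : uniformGrid a b n 0 = a := by simp [uniformGrid]

theorem uniformGrid_self (a b : ℝ) {n : ℕ} (hn : n ≠ 0) : uniformGrid a b n n = b := by
  rw [uniformGrid, mul_div_cancel₀ _ (Nat.cast_ne_zero.2 hn)]; ring

theorem exists_uniformGrid_abs_sub_le {g : ℝ → ℝ} {a b ω : ℝ} (hab : a < b)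
    (hg : ContinuousOn g (Icc a b)) (hω : 0 < ω) :
    ∃ n, 0 < n ∧ ∀ i < n, ∀ t ∈ Icc (uniformGrid a b n i) (uniformGrid a b n (i + 1)),
      ∀ u ∈ Icc (uniformGrid a b n i) (uniformGrid a b n (i + 1)), |g t - g u| ≤ ω := by
  obtain ⟨δ, hδ, hgδ⟩ :=
    Metric.uniformContinuousOn_iff.1 (isCompact_Icc.uniformContinuousOn_of_continuous hg) ω hω
  obtain ⟨n, hn⟩ := exists_nat_gt ((b - a) / δ)
  have hn0 : (0 : ℝ) < n := (div_pos (sub_pos.2 hab) hδ).trans hn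
  have hstep : 0 < (b - a) / n := div_pos (sub_pos.2 hab) hn0
  have hstepδ : (b - a) / n < δ := by rwa [div_lt_iff₀ hn0, mul_comm, ← div_lt_iff₀ hδ]
  refine ⟨n, Nat.cast_pos.1 hn0, fun i hi t ht u hu => ?_⟩
  have hi : (i : ℝ) + 1 ≤ n := by exact_mod_cast hi
  have hsub : Icc (uniformGrid a b n i) (uniformGrid a b n (i + 1)) ⊆ Icc a b := by
    refine Icc_subset_Icc ?_ ?_ <;> simp only [uniformGrid] <;> push_cast
    · nlinarith [i.cast_nonneg (α := ℝ)]
    · calc a + (i + 1) * ((b - a) / n) ≤ a + n * ((b - a) / n) := by gcongr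
        _ = b := by rw [mul_div_cancel₀ _ hn0.ne']; ring
  have hlen : uniformGrid a b n (i + 1) - uniformGrid a b n i = (b - a) / n := by
    simp only [uniformGrid]; push_cast; ring
  rw [← Real.dist_eq]
  refine (hgδ t (hsub ht) u (hsub hu) ?_).le
  rw [Real.dist_eq, abs_sub_lt_iff]
  constructor <;> linarith [ht.1, ht.2, hu.1, hu.2]

namespace PiecewiseLinear

open Finset

def jump (s : ℕ → ℝ) : ℕ → ℝ
  | 0 => s 0
  | i + 1 => s (i + 1) - s i

theorem sum_range_succ_jump_mul (s R : ℕ → ℝ) (n : ℕ) :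
    ∑ i ∈ range (n + 1), jump s i * R i = s n * R n + ∑ i ∈ range n, s i * (R i - R (i + 1)) := by
  induction n with
  | zero => simp [jump]
  | succ n ih => rw [sum_range_succ, ih, sum_range_succ, jump]; ring

theorem relu_sub_relu {u v : ℝ} (huv : u ≤ v) (x : ℝ) :
    max 0 (x - u) - max 0 (x - v) = max u (min v x) - u := by
  rcases le_total x u with hxu | hux
  · rw [max_eq_left (by linarith), max_eq_left (by linarith), max_eq_left (by simp [hxu])]; ring
  rcases le_total x v with hxv | hvx
  · rw [max_eq_right (by linarith), max_eq_left (by linarith), min_eq_right hxv, max_eq_right hux]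
    ring
  · rw [max_eq_right (by linarith), max_eq_right (by linarith), min_eq_left hvx, max_eq_right huv]
    ring

theorem hasDerivAt_max_min {a b x : ℝ} (hxa : x ≠ a) (hxb : x ≠ b) :
    HasDerivAt (fun y => max a (min b y)) (if x ∈ Ioo a b then 1 else 0) x := by
  rcases hxa.lt_or_gt with hxa | hax
  · rw [if_neg fun h => h.1.not_gt hxa]
    refine (hasDerivAt_const x a).congr_of_eventuallyEq ?_
    filter_upwards [Iio_mem_nhds hxa] with y hy
    exact max_eq_left ((min_le_right _ _).trans hy.le)
  rcases hxb.lt_or_gt with hxb | hbx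
  · rw [if_pos ⟨hax, hxb⟩]
    refine (hasDerivAt_id x).congr_of_eventuallyEq ?_
    filter_upwards [Ioo_mem_nhds hax hxb] with y hy
    rw [min_eq_right hy.2.le, max_eq_right hy.1.le, id]
  · rw [if_neg fun h => h.2.not_gt hbx]
    refine (hasDerivAt_const x (max a b)).congr_of_eventuallyEq ?_
    filter_upwards [Ioi_mem_nhds hbx] with y hy
    rw [min_eq_left hy.le]

theorem sum_range_sub_comp_max_min {ξ : ℕ → ℝ} (hξ : Monotone ξ) (g : ℝ → ℝ) (n : ℕ) (x : ℝ) :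
    ∑ i ∈ range n, (g (max (ξ i) (min (ξ (i + 1)) x)) - g (ξ i))
      = g (max (ξ 0) (min (ξ n) x)) - g (ξ 0) := by
  have step (i : ℕ) : g (max (ξ i) (min (ξ (i + 1)) x)) - g (ξ i)
      = g (max (ξ 0) (min (ξ (i + 1)) x)) - g (max (ξ 0) (min (ξ i) x)) := by
    have h0i : ξ 0 ≤ ξ i := hξ i.zero_le
    have hii : ξ i ≤ ξ (i + 1) := hξ i.le_succ
    rcases le_total x (ξ i) with hx | hx
    · rw [max_eq_left ((min_le_right _ _).trans hx), min_eq_right hx,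
        min_eq_right (hx.trans hii), sub_self, sub_self]
    · rw [min_eq_left hx, max_eq_right h0i, max_eq_right (le_min hii hx),
        max_eq_right (le_min (h0i.trans hii) (h0i.trans hx))]
  rw [sum_congr rfl fun i _ => step i, sum_range_sub fun i => g (max (ξ 0) (min (ξ i) x)),
    max_eq_left (min_le_left _ _)]

variable {f : ℝ → ℝ} {ξ : ℕ → ℝ} {n : ℕ} {x : ℝ}

/-- The piecewise-linear interpolant of `f` at the nodes `ξ 0 < ⋯ < ξ n`, constant outside
`[ξ 0, ξ n]`. -/
noncomputable def interp (f : ℝ → ℝ) (ξ : ℕ → ℝ) (n : ℕ) (x : ℝ) : ℝ :=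
  f (ξ 0) + ∑ i ∈ range n, slope f (ξ i) (ξ (i + 1)) * (max (ξ i) (min (ξ (i + 1)) x) - ξ i)

noncomputable def slopes (f : ℝ → ℝ) (ξ : ℕ → ℝ) (n : ℕ) (i : ℕ) : ℝ :=
  if i < n then slope f (ξ i) (ξ (i + 1)) else 0

theorem interp_eq_add_sum_relu (hξ : Monotone ξ) (f : ℝ → ℝ) (n : ℕ) (x : ℝ) :
    interp f ξ n x = f (ξ 0) + ∑ i ∈ range (n + 1), jump (slopes f ξ n) i * max 0 (x - ξ i) := by
  rw [sum_range_succ_jump_mul, slopes, if_neg n.lt_irrefl, zero_mul, zero_add, interp]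
  refine congrArg _ (sum_congr rfl fun i hi => ?_)
  rw [slopes, if_pos (mem_range.1 hi), relu_sub_relu (hξ i.le_succ)]

theorem hasDerivAt_interp (hx : ∀ i ≤ n, x ≠ ξ i) :
    HasDerivAt (interp f ξ n)
      (∑ i ∈ range n, if x ∈ Ioo (ξ i) (ξ (i + 1)) then slope f (ξ i) (ξ (i + 1)) else 0) x := by
  have hterm (i : ℕ) (hi : i ∈ range n) :=
    ((hasDerivAt_max_min (hx i (mem_range.1 hi).le) (hx (i + 1) (mem_range.1 hi))).sub_const
      (ξ i)).const_mul (slope f (ξ i) (ξ (i + 1)))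
  simp only [mul_ite, mul_one, mul_zero] at hterm
  exact (HasDerivAt.fun_sum hterm).const_add _

theorem hasDerivAt_interp_of_mem_Ioo (hξ : Monotone ξ) {k : ℕ} (hk : k < n)
    (hx : x ∈ Ioo (ξ k) (ξ (k + 1))) : HasDerivAt (interp f ξ n) (slope f (ξ k) (ξ (k + 1))) x := by
  have hnode (i : ℕ) : x ≠ ξ i := by
    rintro rfl
    rcases le_or_gt i k with hik | hki
    · exact (hξ hik).not_gt hx.1
    · exact (hξ (Nat.succ_le_of_lt hki)).not_gt hx.2
  convert hasDerivAt_interp (f := f) fun i _ => hnode i using 1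
  rw [sum_eq_single_of_mem k (mem_range.2 hk) fun i _ hik => if_neg fun hxi => ?_, if_pos hx]
  exact hξ.pairwise_disjoint_on_Ioo_succ hik |>.ne_of_mem hxi hx rfl

theorem hasDerivAt_interp_of_notMem_Icc (hξ : Monotone ξ) (hx : x ∉ Icc (ξ 0) (ξ n)) :
    HasDerivAt (interp f ξ n) 0 x := by
  have hseg {i : ℕ} (hi : i < n) : x ∉ Icc (ξ i) (ξ (i + 1)) := fun hxi =>
    hx ⟨(hξ i.zero_le).trans hxi.1, hxi.2.trans (hξ hi)⟩
  convert hasDerivAt_interp (f := f) fun i hi hxi => hx ?_ using 1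
  · exact (sum_eq_zero fun i hi =>
      if_neg fun hxi => hseg (mem_range.1 hi) (Ioo_subset_Icc_self hxi)).symm
  · exact hxi ▸ ⟨hξ i.zero_le, hξ hi⟩

section Segment

variable {a b ω : ℝ} (hf : Differentiable ℝ f) (hab : a < b)
  (hosc : ∀ t ∈ Icc a b, ∀ u ∈ Icc a b, |deriv f t - deriv f u| ≤ ω)
include hf hab hosc

theorem abs_deriv_sub_slope_le {y : ℝ} (hy : y ∈ Icc a b) : |deriv f y - slope f a b| ≤ ω := by
  obtain ⟨c, hc, hcs⟩ := exists_deriv_eq_slope f hab hf.continuous.continuousOn hf.differentiableOn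
  rw [slope_def_field, ← hcs]
  exact hosc y hy c (Ioo_subset_Icc_self hc)

theorem abs_sub_sub_slope_mul_le {y : ℝ} (hy : y ∈ Icc a b) :
    |f y - f a - slope f a b * (y - a)| ≤ ω * (y - a) := by
  have hg (t : ℝ) : HasDerivAt (fun t => f t - slope f a b * t) (deriv f t - slope f a b) t := by
    simpa using (hf t).hasDerivAt.fun_sub ((hasDerivAt_id t).const_mul (slope f a b))
  have key := (convex_Icc a b).norm_image_sub_le_of_norm_deriv_le
    (fun t _ => (hg t).differentiableAt)
    (fun t ht => by rw [(hg t).deriv]; exact abs_deriv_sub_slope_le hf hab hosc ht)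
    (left_mem_Icc.2 hab.le) hy
  rw [Real.norm_eq_abs, Real.norm_eq_abs, abs_of_nonneg (sub_nonneg.2 hy.1)] at key
  convert key using 2
  ring

end Segment

section Error

variable {ω : ℝ} (hξ : StrictMono ξ) (hf : Differentiable ℝ f)
  (hosc : ∀ i < n, ∀ t ∈ Icc (ξ i) (ξ (i + 1)), ∀ u ∈ Icc (ξ i) (ξ (i + 1)),
    |deriv f t - deriv f u| ≤ ω)
include hξ hf hosc

theorem abs_sub_interp_le (hω : 0 ≤ ω) (x : ℝ) :
    |f x - interp f ξ n x| ≤ |f x - f (max (ξ 0) (min (ξ n) x))| + ω * (ξ n - ξ 0) := by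
  set y : ℕ → ℝ := fun i => max (ξ i) (min (ξ (i + 1)) x)
  have hy (i : ℕ) : y i ∈ Icc (ξ i) (ξ (i + 1)) :=
    ⟨le_max_left _ _, max_le (hξ.monotone i.le_succ) (min_le_left _ _)⟩
  have hsplit : f x - interp f ξ n x = (f x - f (max (ξ 0) (min (ξ n) x)))
      + ∑ i ∈ range n, (f (y i) - f (ξ i) - slope f (ξ i) (ξ (i + 1)) * (y i - ξ i)) := by
    rw [sum_sub_distrib, sum_range_sub_comp_max_min hξ.monotone f, interp]
    ring
  have hlen : ∑ i ∈ range n, (y i - ξ i) ≤ ξ n - ξ 0 := by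
    have := sum_range_sub_comp_max_min hξ.monotone id n x
    simp only [id] at this
    rw [this]
    exact sub_le_sub_right (max_le (hξ.monotone n.zero_le) (min_le_left _ _)) _
  calc |f x - interp f ξ n x|
      ≤ |f x - f (max (ξ 0) (min (ξ n) x))|
        + ∑ i ∈ range n, |f (y i) - f (ξ i) - slope f (ξ i) (ξ (i + 1)) * (y i - ξ i)| := by
        rw [hsplit]; exact (abs_add_le _ _).trans (by gcongr; exact abs_sum_le_sum_abs _ _)
    _ ≤ |f x - f (max (ξ 0) (min (ξ n) x))| + ∑ i ∈ range n, ω * (y i - ξ i) := by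
        gcongr with i hi
        exact abs_sub_sub_slope_mul_le hf (hξ i.lt_succ_self) (hosc i (mem_range.1 hi)) (hy i)
    _ ≤ |f x - f (max (ξ 0) (min (ξ n) x))| + ω * (ξ n - ξ 0) := by
        rw [← mul_sum]; gcongr

theorem abs_deriv_sub_deriv_interp_le (hx : x ∈ Icc (ξ 0) (ξ n)) (hxξ : ∀ i ≤ n, x ≠ ξ i) :
    DifferentiableAt ℝ (interp f ξ n) x ∧ |deriv f x - deriv (interp f ξ n) x| ≤ ω := by
  have hxn : x ∈ Ico (ξ 0) (ξ n) := ⟨hx.1, lt_of_le_of_ne hx.2 (hxξ n le_rfl)⟩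
  obtain ⟨k, hk, hxk⟩ := mem_iUnion₂.1 (Ico_subset_biUnion_Ico n ξ hxn)
  have hk : k < n := mem_range.1 hk
  have hxk : x ∈ Ioo (ξ k) (ξ (k + 1)) := ⟨lt_of_le_of_ne hxk.1 (hxξ k hk.le).symm, hxk.2⟩
  have hd := hasDerivAt_interp_of_mem_Ioo (f := f) hξ.monotone hk hxk
  exact ⟨hd.differentiableAt, hd.deriv ▸
    abs_deriv_sub_slope_le hf (hξ k.lt_succ_self) (hosc k hk) (Ioo_subset_Icc_self hxk)⟩

theorem differentiableAt_interp_and_abs_deriv_sub_lt {ε : ℝ} (hωε : ω < ε)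
    (htail : ∀ x ∉ Icc (ξ 0) (ξ n), |deriv f x| < ε) (hxξ : ∀ i ≤ n, x ≠ ξ i) :
    DifferentiableAt ℝ (interp f ξ n) x ∧ |deriv f x - deriv (interp f ξ n) x| < ε := by
  by_cases hx : x ∈ Icc (ξ 0) (ξ n)
  · obtain ⟨hd, hle⟩ := abs_deriv_sub_deriv_interp_le hξ hf hosc hx hxξ
    exact ⟨hd, hle.trans_lt hωε⟩
  · have hd := hasDerivAt_interp_of_notMem_Icc (f := f) hξ.monotone hx
    exact ⟨hd.differentiableAt, by rw [hd.deriv, sub_zero]; exact htail x hx⟩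

end Error

end PiecewiseLinear

open PiecewiseLinear in
theorem exists_relu_combination_approx {f : ℝ → ℝ} (hf : ContDiff ℝ 1 f) {a b : ℝ}
    (hfa : Tendsto f atBot (𝓝 a)) (hfb : Tendsto f atTop (𝓝 b))
    (hf'a : Tendsto (deriv f) atBot (𝓝 0)) (hf'b : Tendsto (deriv f) atTop (𝓝 0))
    {ε : ℝ} (hε : 0 < ε) :
    ∃ (N : ℕ) (c₀ : ℝ) (c ξ : Fin N → ℝ), StrictMono ξ ∧
      let h : ℝ → ℝ := fun x => c₀ + ∑ i, c i * max 0 (x - ξ i)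
      (∀ x, |f x - h x| < ε) ∧
      (∀ x, x ∉ range ξ → DifferentiableAt ℝ h x ∧ |deriv f x - deriv h x| < ε) := by
  obtain ⟨M, hM, hfM, hf'M⟩ : ∃ M : ℝ, 1 ≤ M ∧ (∀ x, |f x - f (max (-M) (min M x))| < ε / 2) ∧
      ∀ x ∉ Icc (-M) M, |deriv f x| < ε :=
    ((eventually_ge_atTop 1).and ((eventually_abs_sub_comp_max_min_lt hfa hfb (half_pos hε)).and
      (eventually_abs_lt_of_notMem_Icc hf'a hf'b hε))).exists
  have hω : 0 < ε / (8 * M) := by positivity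
  obtain ⟨n, hn, hosc⟩ := exists_uniformGrid_abs_sub_le (by linarith : -M < M)
    (hf.continuous_deriv le_rfl).continuousOn hω
  set ξ := uniformGrid (-M) M n
  have hξ : StrictMono ξ := uniformGrid_strictMono (by linarith) hn
  have hξ0 : ξ 0 = -M := uniformGrid_zero _ _ _
  have hξn : ξ n = M := uniformGrid_self _ _ hn.ne'
  have hf' := hf.differentiable one_ne_zero
  refine ⟨n + 1, f (-M), fun i => jump (slopes f ξ n) i, fun i => ξ i,
    hξ.comp Fin.val_strictMono, ?_⟩
  intro h
  have hh : h = interp f ξ n := funext fun x => by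
    rw [interp_eq_add_sum_relu hξ.monotone, hξ0,
      ← Fin.sum_univ_eq_sum_range (fun i => jump (slopes f ξ n) i * max 0 (x - ξ i))]
  rw [hh]
  refine ⟨fun x => ?_, fun x hx => ?_⟩
  · have hgrid : ε / (8 * M) * (ξ n - ξ 0) = ε / 4 := by
      rw [hξ0, hξn]; field_simp; ring
    have := abs_sub_interp_le hξ hf' hosc hω.le x
    rw [hgrid, hξ0, hξn] at this
    linarith [hfM x]
  · refine differentiableAt_interp_and_abs_deriv_sub_lt hξ hf' hosc
      (div_lt_self hε (by linarith)) (hξ0 ▸ hξn ▸ hf'M) fun i hi hxi => hx ⟨⟨i, ?_⟩, hxi.symm⟩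
    omega

theorem tendsto_deriv_sigmoid_atBot : Tendsto (deriv Real.sigmoid) atBot (𝓝 0) := by
  rw [Real.deriv_sigmoid]
  simpa using Real.tendsto_sigmoid_atBot.mul (Real.tendsto_sigmoid_atBot.const_sub 1)

theorem tendsto_deriv_sigmoid_atTop : Tendsto (deriv Real.sigmoid) atTop (𝓝 0) := by
  rw [Real.deriv_sigmoid]
  simpa using Real.tendsto_sigmoid_atTop.mul (Real.tendsto_sigmoid_atTop.const_sub 1)

/-- **ReLU combinations approximate the sigmoid in Sobolev sense (Corollary 1).**
Let `σ(x) = 1/(1 + e^{−x})`. For every `ε > 0` there is a finite combination of ReLU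
functions `h(x) = c₀ + ∑ i, cᵢ * max 0 (x − ξᵢ)` with `|σ x − h x| < ε` for all `x`, and
`h` differentiable with `|σ' x − h' x| < ε` at every `x` that is not a breakpoint. -/
theorem relu_combination_sobolev_approximates_sigmoid
    (sigmoid : ℝ → ℝ) (hsigmoid : ∀ x, sigmoid x = 1 / (1 + Real.exp (-x)))
    (ε : ℝ) (hε : 0 < ε) :
    ∃ (N : ℕ) (c₀ : ℝ) (c ξ : Fin N → ℝ),
      StrictMono ξ ∧
      let h : ℝ → ℝ := fun x => c₀ + ∑ i, c i * max 0 (x - ξ i)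
      (∀ x : ℝ, |sigmoid x - h x| < ε) ∧
      (∀ x : ℝ, x ∉ Set.range ξ →
        DifferentiableAt ℝ h x ∧ |deriv sigmoid x - deriv h x| < ε) := by
  obtain rfl : sigmoid = Real.sigmoid := funext fun x => by rw [hsigmoid, Real.sigmoid_def, one_div]
  exact exists_relu_combination_approx (contDiff_sigmoid.of_le le_top) Real.tendsto_sigmoid_atBot
    Real.tendsto_sigmoid_atTop tendsto_deriv_sigmoid_atBot tendsto_deriv_sigmoid_atTop hε
end
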